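/- Let X be distributed according to the hyperboloid (hyperbolic von Mises–Fisher) distribution on H^k = {x ∈ ℝ^{k+1} : (x,x) = −1, x_{k+1} > 0}, with density proportional to exp(κ(x,μ)) with respect to the invariant volume measure, where (x,y) = Σ_{i=1}^k xᵢyᵢ − x_{k+1}y_{k+1} is the Minkowski form, μ ∈ H^k, and κ > 0. Then E[d(X,p)²] > E[d(X,μ)²] for all p ∈ H^k with p ≠ μ, where d(x,y) = arcosh(−(x,y)) is the hyperbolic distance; i.e., μ is the unique Fréchet mean. -/

import Mathlib

/-!
The reflection of Minkowski space in the hyperplane orthogonal to `μ - p` preserves the form,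
maps `H^k` to itself and swaps `μ` and `p`. Since the volume is invariant under it, twice the gap
`E d(X,p)² - E d(X,μ)²` equals `∫ (d(x,p)² - d(x,μ)²) (f_μ(x) - f_p(x)) dvol`, where `f_q` is the
density centred at `q`. Both factors have the sign of `(x,μ) - (x,p)`, so the integrand is
nonnegative and vanishes only on the bisector `{(x,μ) = (x,p)}`; that set is null, because a second
reflection maps it into its complement.

The moments are finite although the volume is known only through its invariance and the
normalisation of `f_μ`: every `f_q` is then normalised as well, and `d(x,p)² f_μ(x)` is dominated by
a finite sum of `f_q`, with `q` running over a net of `H^k` pulled back from a net of the unit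
sphere.
-/

open MeasureTheory

/-- The Minkowski pseudo-inner product on `ℝ^{k+1}`. -/
def mink {k : ℕ} (x y : Fin (k + 1) → ℝ) : ℝ :=
  (∑ i : Fin k, x i.castSucc * y i.castSucc) - x (Fin.last k) * y (Fin.last k)

/-- The hyperboloid model `H^k` of hyperbolic space. -/
def hyperboloid (k : ℕ) : Set (Fin (k + 1) → ℝ) :=
  {x | mink x x = -1 ∧ 0 < x (Fin.last k)}

/-- The hyperbolic distance `d(x,y) = arcosh(−(x,y))` on the hyperboloid, where
`arcosh t = log (t + √(t² − 1))`. -/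
noncomputable def hypDist {k : ℕ} (x y : Fin (k + 1) → ℝ) : ℝ :=
  Real.log (-(mink x y) + Real.sqrt ((-(mink x y)) ^ 2 - 1))

open Real Set Function

lemma sub_mul_sub_pos_of_strictAntiOn_of_strictMonoOn {α : Type*} [LinearOrder α] {s : Set α}
    {f g : α → ℝ} (hf : StrictAntiOn f s) (hg : StrictMonoOn g s) {a b : α} (ha : a ∈ s)
    (hb : b ∈ s) (hab : a ≠ b) : 0 < (f b - f a) * (g a - g b) := by
  rcases hab.lt_or_gt with h | h
  · exact mul_pos_of_neg_of_neg (sub_neg.2 (hf ha hb h)) (sub_neg.2 (hg ha hb h))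
  · exact mul_pos (sub_pos.2 (hf hb ha h)) (sub_pos.2 (hg hb ha h))

lemma strictAntiOn_sq_arcosh_neg : StrictAntiOn (fun s => arcosh (-s) ^ 2) (Iic (-1)) := by
  intro a ha b hb hab
  have ha' : 1 ≤ -a := by simp only [mem_Iic] at ha; linarith
  have hb' : 1 ≤ -b := by simp only [mem_Iic] at hb; linarith
  have := (arcosh_lt_arcosh (by linarith) (by linarith)).2 (neg_lt_neg hab)
  exact pow_lt_pow_left₀ this (arcosh_nonneg hb') two_ne_zero

lemma arcosh_le_two_mul {t : ℝ} (ht : 1 ≤ t) : arcosh t ≤ 2 * t := by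
  have hsqrt : √(t ^ 2 - 1) ≤ t := Real.sqrt_le_iff.2 ⟨by linarith, by linarith⟩
  have hpos : 0 < t + √(t ^ 2 - 1) := by positivity
  linarith [Real.log_le_sub_one_of_pos hpos, show arcosh t = log (t + √(t ^ 2 - 1)) from rfl]

lemma sq_le_mul_exp {κ t : ℝ} (hκ : 0 < κ) (ht : 0 ≤ t) :
    t ^ 2 ≤ 32 / κ ^ 2 * exp (κ * t / 4) := by
  have h := pow_div_factorial_le_exp (x := κ * t / 4) (by positivity) 2
  rw [Nat.factorial_two, Nat.cast_ofNat, div_le_iff₀ two_pos] at h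
  rw [div_mul_eq_mul_div, le_div_iff₀ (by positivity)]
  nlinarith

theorem exists_finset_sphere_forall_inner_ge {E : Type*} [NormedAddCommGroup E]
    [InnerProductSpace ℝ E] [FiniteDimensional ℝ E] {ε : ℝ} (hε : 0 < ε) :
    ∃ Ω : Finset E, (∀ ω ∈ Ω, ‖ω‖ = 1) ∧ ∀ v : E, ‖v‖ = 1 → ∃ ω ∈ Ω, 1 - ε ≤ inner ℝ v ω := by
  obtain ⟨t, hts, ht, hcover⟩ := finite_cover_balls_of_compact (isCompact_sphere (0 : E) 1) hε
  refine ⟨ht.toFinset, fun ω hω => by simpa using hts (ht.mem_toFinset.1 hω), fun v hv => ?_⟩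
  obtain ⟨ω, hωt, hvω⟩ := mem_iUnion₂.1 (hcover (mem_sphere_zero_iff_norm.2 hv))
  have hω : ‖ω‖ = 1 := by simpa using hts hωt
  refine ⟨ω, ht.mem_toFinset.2 hωt, ?_⟩
  have hdist : ‖v - ω‖ < ε := by rwa [← dist_eq_norm]
  have htri : ‖v - ω‖ ≤ 2 := by linarith [norm_sub_le v ω]
  have := norm_sub_sq_real v ω
  rw [hv, hω] at this
  nlinarith [norm_nonneg (v - ω)]

/-- The change of variables `g` swaps the two cross terms, so `∫ D G - ∫ D F` is half the
integral of `(G - F) (D - D')`. -/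
theorem integral_mul_lt_of_measurePreserving {α : Type*} [MeasurableSpace α] {ν : Measure α}
    {g : α → α} (hg : MeasurePreserving g ν ν) {F G D D' : α → ℝ}
    (hF : ∀ x, F (g x) = G x) (hG : ∀ x, G (g x) = F x) (hD : ∀ x, D (g x) = D' x)
    (hDF : Integrable (fun x => D x * F x) ν) (hDG : Integrable (fun x => D x * G x) ν)
    (hnonneg : 0 ≤ᵐ[ν] fun x => (G x - F x) * (D x - D' x))
    (hpos : 0 < ν (support fun x => (G x - F x) * (D x - D' x))) :
    ∫ x, D x * F x ∂ν < ∫ x, D x * G x ∂ν := by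
  have hcomp : ∀ h : α → ℝ, Integrable h ν →
      Integrable (fun x => h (g x)) ν ∧ ∫ x, h (g x) ∂ν = ∫ x, h x ∂ν := fun h hh =>
    ⟨hg.integrable_comp_of_integrable hh, by
      rw [← integral_map hg.aemeasurable (by rw [hg.map_eq]; exact hh.aestronglyMeasurable),
        hg.map_eq]⟩
  obtain ⟨hD'G, hD'G_eq⟩ := hcomp _ hDF
  obtain ⟨hD'F, hD'F_eq⟩ := hcomp _ hDG
  simp only [hF, hG, hD] at hD'G hD'G_eq hD'F hD'F_eq
  have hexpand : (fun x => (G x - F x) * (D x - D' x))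
      = fun x => (D x * G x - D x * F x) - (D' x * G x - D' x * F x) := by
    ext x; ring
  have hint : Integrable (fun x => (G x - F x) * (D x - D' x)) ν := by
    rw [hexpand]; exact (hDG.sub hDF).sub (hD'G.sub hD'F)
  have h := (integral_pos_iff_support_of_nonneg_ae hnonneg hint).2 hpos
  rw [hexpand, integral_sub (f := fun x => D x * G x - D x * F x)
    (g := fun x => D' x * G x - D' x * F x) (hDG.sub hDF) (hD'G.sub hD'F),
    integral_sub hDG hDF, integral_sub hD'G hD'F, hD'G_eq, hD'F_eq] at h
  linarith

lemma integrable_of_isFiniteMeasure_withDensity_ofReal {α : Type*} [MeasurableSpace α]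
    {ν : Measure α} {f : α → ℝ} (hf : Measurable f) (hf0 : ∀ x, 0 ≤ f x)
    (hfin : IsFiniteMeasure (ν.withDensity fun x => ENNReal.ofReal (f x))) : Integrable f ν := by
  have h := hfin.measure_univ_lt_top
  rw [withDensity_apply _ MeasurableSet.univ, Measure.restrict_univ] at h
  simpa [ENNReal.toReal_ofReal (hf0 _)] using
    integrable_toReal_of_lintegral_ne_top hf.ennreal_ofReal.aemeasurable h.ne

lemma integral_withDensity_ofReal {α : Type*} [MeasurableSpace α] {ν : Measure α} {f : α → ℝ}
    (hf : Measurable f) (hf0 : ∀ x, 0 ≤ f x) (g : α → ℝ) :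
    ∫ x, g x ∂ν.withDensity (fun x => ENNReal.ofReal (f x)) = ∫ x, f x * g x ∂ν := by
  rw [integral_withDensity_eq_integral_toReal_smul hf.ennreal_ofReal
    (ae_of_all _ fun _ => ENNReal.ofReal_lt_top)]
  simp only [ENNReal.toReal_ofReal (hf0 _), smul_eq_mul]

section Minkowski

variable {k : ℕ}

lemma mink_comm (x y : Fin (k + 1) → ℝ) : mink x y = mink y x := by
  simp only [mink, mul_comm]

lemma mink_sub_left (x y z : Fin (k + 1) → ℝ) : mink (x - y) z = mink x z - mink y z := by
  simp only [mink, Pi.sub_apply, sub_mul, Finset.sum_sub_distrib]; ring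

lemma mink_smul_left (r : ℝ) (x y : Fin (k + 1) → ℝ) : mink (r • x) y = r * mink x y := by
  simp only [mink, Pi.smul_apply, smul_eq_mul, mul_assoc, ← Finset.mul_sum]; ring

lemma mink_neg_left (x y : Fin (k + 1) → ℝ) : mink (-x) y = -mink x y := by
  simp only [mink, Pi.neg_apply, neg_mul, Finset.sum_neg_distrib]; ring

lemma mink_sub_right (x y z : Fin (k + 1) → ℝ) : mink x (y - z) = mink x y - mink x z := by
  simp only [mink_comm x, mink_sub_left]

lemma mink_smul_right (r : ℝ) (x y : Fin (k + 1) → ℝ) : mink x (r • y) = r * mink x y := by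
  simp only [mink_comm x, mink_smul_left]

lemma mink_neg_right (x y : Fin (k + 1) → ℝ) : mink x (-y) = -mink x y := by
  simp only [mink_comm x, mink_neg_left]

@[fun_prop]
lemma measurable_mink_left (y : Fin (k + 1) → ℝ) : Measurable fun x => mink x y := by
  unfold mink; fun_prop

@[fun_prop]
lemma measurable_hypDist_left (y : Fin (k + 1) → ℝ) : Measurable fun x => hypDist x y := by
  unfold hypDist; fun_prop

def spatial (x : Fin (k + 1) → ℝ) : EuclideanSpace ℝ (Fin k) := WithLp.toLp 2 (Fin.init x)

lemma mink_eq_inner_sub (x y : Fin (k + 1) → ℝ) :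
    mink x y = inner ℝ (spatial x) (spatial y) - x (Fin.last k) * y (Fin.last k) := by
  simp [mink, spatial, PiLp.inner_apply, Fin.init, mul_comm]

lemma ext_spatial {x y : Fin (k + 1) → ℝ} (hs : spatial x = spatial y)
    (hl : x (Fin.last k) = y (Fin.last k)) : x = y := by
  rw [← Fin.snoc_init_self x, ← Fin.snoc_init_self y, hl]
  congr 1
  exact congrArg WithLp.ofLp hs

end Minkowski

section Hyperboloid

variable {k : ℕ} {x y z : Fin (k + 1) → ℝ}

lemma norm_spatial_sq (hx : x ∈ hyperboloid k) : ‖spatial x‖ ^ 2 = x (Fin.last k) ^ 2 - 1 := by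
  have h := hx.1
  rw [mink_eq_inner_sub, real_inner_self_eq_norm_sq] at h
  linarith

lemma one_le_last (hx : x ∈ hyperboloid k) : 1 ≤ x (Fin.last k) := by
  nlinarith [norm_spatial_sq hx, sq_nonneg ‖spatial x‖, hx.2]

lemma norm_spatial_mul_le (hx : x ∈ hyperboloid k) (hy : y ∈ hyperboloid k) :
    ‖spatial x‖ * ‖spatial y‖ ≤ x (Fin.last k) * y (Fin.last k) - 1 := by
  have hs := one_le_last hx
  have ht := one_le_last hy
  apply abs_le_of_sq_le_sq' _ (by nlinarith) |>.2
  rw [mul_pow, norm_spatial_sq hx, norm_spatial_sq hy]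
  nlinarith [sq_nonneg (x (Fin.last k) - y (Fin.last k))]

lemma mink_le_neg_one (hx : x ∈ hyperboloid k) (hy : y ∈ hyperboloid k) : mink x y ≤ -1 := by
  rw [mink_eq_inner_sub]
  linarith [real_inner_le_norm (spatial x) (spatial y), norm_spatial_mul_le hx hy]

lemma eq_of_mink_eq_neg_one (hx : x ∈ hyperboloid k) (hy : y ∈ hyperboloid k)
    (h : mink x y = -1) : x = y := by
  have hs := one_le_last hx
  have ht := one_le_last hy
  have hxs := norm_spatial_sq hx
  have hyt := norm_spatial_sq hy
  rw [mink_eq_inner_sub] at h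
  have hcs : x (Fin.last k) * y (Fin.last k) - 1 ≤ ‖spatial x‖ * ‖spatial y‖ := by
    linarith [real_inner_le_norm (spatial x) (spatial y)]
  have hsq := mul_self_le_mul_self (by nlinarith) hcs
  have hst : x (Fin.last k) = y (Fin.last k) := by
    nlinarith [sq_nonneg (x (Fin.last k) - y (Fin.last k))]
  refine ext_spatial ?_ hst
  have hzero : ‖spatial x - spatial y‖ ^ 2 = 0 := by
    rw [norm_sub_sq_real, hxs, hyt, hst]
    rw [hst] at h
    linarith [sq (y (Fin.last k))]
  exact sub_eq_zero.1 (norm_eq_zero.1 (pow_eq_zero_iff two_ne_zero |>.1 hzero))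

lemma mink_lt_neg_one (hx : x ∈ hyperboloid k) (hy : y ∈ hyperboloid k) (hxy : x ≠ y) :
    mink x y < -1 :=
  (mink_le_neg_one hx hy).lt_of_ne fun h => hxy (eq_of_mink_eq_neg_one hx hy h)

lemma neg_mink_le_two_mul_last (hx : x ∈ hyperboloid k) (hy : y ∈ hyperboloid k) :
    -mink x y ≤ 2 * x (Fin.last k) * y (Fin.last k) := by
  rw [mink_eq_inner_sub]
  nlinarith [neg_le_of_abs_le (abs_real_inner_le_norm (spatial x) (spatial y)),
    norm_spatial_mul_le hx hy]

lemma mem_hyperboloid_of_mink_neg (hz : mink z z = -1) (hx : x ∈ hyperboloid k)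
    (hxz : mink x z < 0) : z ∈ hyperboloid k := by
  refine ⟨hz, lt_of_not_ge fun hz0 => ?_⟩
  have hnz : -z ∈ hyperboloid k := by
    refine ⟨by rwa [mink_neg_left, mink_neg_right, neg_neg], ?_⟩
    have hz' := hz
    rw [mink_eq_inner_sub, real_inner_self_eq_norm_sq] at hz'
    simp only [Pi.neg_apply]
    nlinarith [sq_nonneg ‖spatial z‖]
  have := mink_le_neg_one hx hnz
  rw [mink_neg_right] at this
  linarith

end Hyperboloid

section Reflection

variable {k : ℕ} {u a b : Fin (k + 1) → ℝ}

/-- When `mink u u = 0` this is the identity (as `r / 0 = 0`); in particular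
`minkRefl (a - a) = id`, so the lemmas below need no case `a = b`. -/
noncomputable def minkRefl (u y : Fin (k + 1) → ℝ) : Fin (k + 1) → ℝ :=
  y - (2 * mink y u / mink u u) • u

lemma mink_minkRefl_left (u x y : Fin (k + 1) → ℝ) :
    mink (minkRefl u x) y = mink x (minkRefl u y) := by
  simp only [minkRefl, mink_sub_left, mink_sub_right, mink_smul_left, mink_smul_right,
    mink_comm u y]
  ring

lemma mink_minkRefl_minkRefl (u x y : Fin (k + 1) → ℝ) :
    mink (minkRefl u x) (minkRefl u y) = mink x y := by
  by_cases hu : mink u u = 0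
  · simp [minkRefl, hu]
  · rw [mink_minkRefl_left]
    simp only [minkRefl, mink_sub_left, mink_sub_right, mink_smul_left, mink_smul_right]
    field_simp
    ring

lemma hypDist_minkRefl_left (u x y : Fin (k + 1) → ℝ) :
    hypDist (minkRefl u x) y = hypDist x (minkRefl u y) := by
  rw [hypDist, hypDist, mink_minkRefl_left]

lemma measurable_minkRefl (u : Fin (k + 1) → ℝ) : Measurable (minkRefl u) := by
  unfold minkRefl; fun_prop

lemma minkRefl_mapsTo (hu : 0 ≤ mink u u) :
    MapsTo (minkRefl u) (hyperboloid k) (hyperboloid k) := by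
  intro y hy
  rcases hu.eq_or_lt with hu | hu
  · simpa [minkRefl, ← hu] using hy
  refine mem_hyperboloid_of_mink_neg ((mink_minkRefl_minkRefl u y y).trans hy.1) hy ?_
  have : 0 ≤ 2 * mink y u / mink u u * mink y u := by
    rw [div_mul_eq_mul_div, mul_assoc, ← sq]
    exact div_nonneg (by positivity) hu.le
  simp only [minkRefl, mink_sub_right, mink_smul_right, hy.1]
  linarith

lemma minkRefl_neg (u : Fin (k + 1) → ℝ) : minkRefl (-u) = minkRefl u := by
  ext y : 1
  simp only [minkRefl, mink_neg_left, mink_neg_right, neg_neg, smul_neg, mul_neg, neg_div,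
    neg_smul]

lemma mink_sub_self_eq (ha : a ∈ hyperboloid k) (hb : b ∈ hyperboloid k) :
    mink (a - b) (a - b) = -2 * (1 + mink a b) := by
  simp only [mink_sub_left, mink_sub_right, ha.1, hb.1, mink_comm b a]
  ring

lemma mink_sub_self_nonneg (ha : a ∈ hyperboloid k) (hb : b ∈ hyperboloid k) :
    0 ≤ mink (a - b) (a - b) := by
  rw [mink_sub_self_eq ha hb]
  linarith [mink_le_neg_one ha hb]

lemma minkRefl_sub_apply_left (ha : a ∈ hyperboloid k) (hb : b ∈ hyperboloid k) :
    minkRefl (a - b) a = b := by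
  rcases eq_or_ne a b with rfl | hab
  · simp [minkRefl]
  have hm := mink_lt_neg_one ha hb hab
  have hcoef : 2 * mink a (a - b) / mink (a - b) (a - b) = 1 := by
    rw [mink_sub_self_eq ha hb, mink_sub_right, ha.1, div_eq_one_iff_eq (by linarith)]
    ring
  rw [minkRefl, hcoef, one_smul, sub_sub_cancel]

lemma minkRefl_sub_apply_right (ha : a ∈ hyperboloid k) (hb : b ∈ hyperboloid k) :
    minkRefl (a - b) b = a := by
  rw [← neg_sub, minkRefl_neg, minkRefl_sub_apply_left hb ha]

def IsLorentzInvariant (vol : Measure (Fin (k + 1) → ℝ)) : Prop :=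
  ∀ g : (Fin (k + 1) → ℝ) → (Fin (k + 1) → ℝ), Measurable g →
    (∀ x y, mink (g x) (g y) = mink x y) →
    MapsTo g (hyperboloid k) (hyperboloid k) → vol.map g = vol

lemma IsLorentzInvariant.measurePreserving_minkRefl {vol : Measure (Fin (k + 1) → ℝ)}
    (hvol : IsLorentzInvariant vol) (hu : 0 ≤ mink u u) :
    MeasurePreserving (minkRefl u) vol vol :=
  ⟨measurable_minkRefl u,
    hvol _ (measurable_minkRefl u) (mink_minkRefl_minkRefl u) (minkRefl_mapsTo hu)⟩

end Reflection

section Net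

variable {k : ℕ}

def basePoint (k : ℕ) : Fin (k + 1) → ℝ := Pi.single (Fin.last k) 1

lemma basePoint_mem (k : ℕ) : basePoint k ∈ hyperboloid k := by
  simp [hyperboloid, basePoint, mink, Fin.castSucc_ne_last]

lemma mink_basePoint_right (x : Fin (k + 1) → ℝ) : mink x (basePoint k) = -x (Fin.last k) := by
  simp [basePoint, mink, Fin.castSucc_ne_last]

lemma spatial_snoc (w : EuclideanSpace ℝ (Fin k)) (t : ℝ) :
    spatial (Fin.snoc (α := fun _ => ℝ) w.ofLp t) = w := by
  simp [spatial]

lemma exists_finset_neg_mink_le_last (k : ℕ) :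
    ∃ Q : Finset (Fin (k + 1) → ℝ), (∀ q ∈ Q, q ∈ hyperboloid k) ∧
      ∀ x ∈ hyperboloid k, ∃ q ∈ Q, -mink x q ≤ 3 / 4 * x (Fin.last k) + 1 / 2 := by
  obtain ⟨Ω, hΩ, hnet⟩ :=
    exists_finset_sphere_forall_inner_ge (E := EuclideanSpace ℝ (Fin k)) (ε := 1 / 3) (by norm_num)
  -- `(3/4)² - (5/4)² = -1`, and `⟪u, ω⟫ ≥ 2/3` leaves the slope `5/4 - (3/4)(2/3) = 3/4 < 1`.
  let lift : EuclideanSpace ℝ (Fin k) → Fin (k + 1) → ℝ :=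
    fun ω => Fin.snoc (α := fun _ => ℝ) ((3 / 4 : ℝ) • ω).ofLp (5 / 4)
  have mink_lift (x ω) :
      mink x (lift ω) = 3 / 4 * inner ℝ (spatial x) ω - 5 / 4 * x (Fin.last k) := by
    rw [mink_eq_inner_sub, spatial_snoc, inner_smul_right]
    simp [lift]
    ring
  refine ⟨insert (basePoint k) (Ω.image lift), ?_, fun x hx => ?_⟩
  · simp only [Finset.mem_insert, Finset.mem_image]
    rintro q (rfl | ⟨ω, hω, rfl⟩)
    · exact basePoint_mem k
    refine ⟨?_, by norm_num [lift]⟩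
    rw [mink_lift, spatial_snoc, real_inner_smul_left, real_inner_self_eq_norm_sq, hΩ ω hω]
    simp [lift]
    norm_num
  have ht := one_le_last hx
  have hw := norm_spatial_sq hx
  rcases eq_or_ne (spatial x) 0 with h0 | h0
  · refine ⟨basePoint k, Finset.mem_insert_self _ _, ?_⟩
    rw [h0, norm_zero] at hw
    rw [mink_basePoint_right]
    nlinarith
  obtain ⟨ω, hω, hinner⟩ := hnet (‖spatial x‖⁻¹ • spatial x) (norm_smul_inv_norm h0)
  refine ⟨lift ω, Finset.mem_insert_of_mem (Finset.mem_image_of_mem lift hω), ?_⟩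
  rw [real_inner_smul_left, le_inv_mul_iff₀ (norm_pos_iff.2 h0)] at hinner
  have : x (Fin.last k) - 1 ≤ ‖spatial x‖ := by nlinarith [norm_nonneg (spatial x)]
  rw [mink_lift]
  nlinarith

end Net

section Transport

variable {k : ℕ} {x y z : Fin (k + 1) → ℝ}

lemma minkRefl_basePoint_sub_apply_last (hz : z ∈ hyperboloid k) (x : Fin (k + 1) → ℝ) :
    minkRefl (basePoint k - z) x (Fin.last k) = -mink x z := by
  rw [← neg_neg (minkRefl _ x _), ← mink_basePoint_right, mink_minkRefl_left,
    minkRefl_sub_apply_left (basePoint_mem k) hz]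

lemma neg_mink_le_two_mul (hx : x ∈ hyperboloid k) (hy : y ∈ hyperboloid k)
    (hz : z ∈ hyperboloid k) : -mink x y ≤ 2 * -mink x z * -mink y z := by
  have hR := minkRefl_mapsTo (mink_sub_self_nonneg (basePoint_mem k) hz)
  simpa only [mink_minkRefl_minkRefl, minkRefl_basePoint_sub_apply_last hz] using
    neg_mink_le_two_mul_last (hR hx) (hR hy)

lemma exists_finset_neg_mink_le (hz : z ∈ hyperboloid k) :
    ∃ Q : Finset (Fin (k + 1) → ℝ), (∀ q ∈ Q, q ∈ hyperboloid k) ∧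
      ∀ x ∈ hyperboloid k, ∃ q ∈ Q, -mink x q ≤ 3 / 4 * -mink x z + 1 / 2 := by
  obtain ⟨Q, hQ, hnet⟩ := exists_finset_neg_mink_le_last k
  have hR := minkRefl_mapsTo (mink_sub_self_nonneg (basePoint_mem k) hz)
  refine ⟨Q.image (minkRefl (basePoint k - z)), by simpa using fun q hq => hR (hQ q hq),
    fun x hx => ?_⟩
  obtain ⟨q, hq, hxq⟩ := hnet _ (hR hx)
  refine ⟨_, Finset.mem_image_of_mem _ hq, ?_⟩
  rwa [mink_minkRefl_left, minkRefl_basePoint_sub_apply_last hz] at hxq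

end Transport

section Moments

variable {k : ℕ} {κ : ℝ} {μ p : Fin (k + 1) → ℝ}

lemma exists_sq_hypDist_mul_exp_le_sum (hκ : 0 < κ) (hμ : μ ∈ hyperboloid k)
    (hp : p ∈ hyperboloid k) :
    ∃ Q : Finset (Fin (k + 1) → ℝ), (∀ q ∈ Q, q ∈ hyperboloid k) ∧ ∃ M : ℝ,
      ∀ x ∈ hyperboloid k,
        hypDist x p ^ 2 * exp (κ * mink x μ) ≤ M * ∑ q ∈ Q, exp (κ * mink x q) := by
  obtain ⟨Q, hQ, hnet⟩ := exists_finset_neg_mink_le hμ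
  set C := -mink p μ
  refine ⟨Q, hQ, 512 * C ^ 2 / κ ^ 2 * exp (κ / 2), fun x hx => ?_⟩
  obtain ⟨q, hq, hxq⟩ := hnet x hx
  set t := -mink x μ
  have ht : 1 ≤ t := by linarith [mink_le_neg_one hx hμ]
  have hC : 1 ≤ C := by linarith [mink_le_neg_one hp hμ]
  have hxp : 1 ≤ -mink x p := by linarith [mink_le_neg_one hx hp]
  have hd : hypDist x p ≤ 4 * C * t := by
    have := neg_mink_le_two_mul hx hp hμ
    have := arcosh_le_two_mul hxp
    show arcosh _ ≤ _
    nlinarith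
  have hd0 : 0 ≤ hypDist x p := arcosh_nonneg hxp
  have hexp : exp (κ * t / 4) * exp (κ * mink x μ) ≤ exp (κ / 2) * exp (κ * mink x q) := by
    rw [← exp_add, ← exp_add]
    exact exp_le_exp.2 (by nlinarith)
  have hsum : exp (κ * mink x q) ≤ ∑ q ∈ Q, exp (κ * mink x q) :=
    Finset.single_le_sum (f := fun q => exp (κ * mink x q)) (fun q _ => (exp_pos _).le) hq
  calc hypDist x p ^ 2 * exp (κ * mink x μ)
      ≤ 16 * C ^ 2 * t ^ 2 * exp (κ * mink x μ) := by gcongr; nlinarith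
    _ ≤ 16 * C ^ 2 * (32 / κ ^ 2 * exp (κ * t / 4)) * exp (κ * mink x μ) := by
        gcongr; exact sq_le_mul_exp hκ (by linarith)
    _ = 512 * C ^ 2 / κ ^ 2 * (exp (κ * t / 4) * exp (κ * mink x μ)) := by ring
    _ ≤ 512 * C ^ 2 / κ ^ 2 * (exp (κ / 2) * ∑ q ∈ Q, exp (κ * mink x q)) := by
        gcongr 512 * C ^ 2 / κ ^ 2 * ?_
        exact hexp.trans (mul_le_mul_of_nonneg_left hsum (exp_pos _).le)
    _ = _ := by ring

lemma integrable_sq_hypDist_mul_exp {vol : Measure (Fin (k + 1) → ℝ)} (hκ : 0 < κ)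
    (hsupp : vol (hyperboloid k)ᶜ = 0)
    (hexp : ∀ q ∈ hyperboloid k, Integrable (fun x => exp (κ * mink x q)) vol)
    (hμ : μ ∈ hyperboloid k) (hp : p ∈ hyperboloid k) :
    Integrable (fun x => hypDist x p ^ 2 * exp (κ * mink x μ)) vol := by
  obtain ⟨Q, hQ, M, hM⟩ := exists_sq_hypDist_mul_exp_le_sum hκ hμ hp
  refine Integrable.mono' ((integrable_finsetSum Q fun q hq => hexp q (hQ q hq)).const_mul M)
    (by fun_prop) ?_
  filter_upwards [mem_ae_iff.2 hsupp] with x hx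
  rw [Real.norm_of_nonneg (by positivity)]
  simpa using hM x hx

end Moments

section Invariance

variable {k : ℕ} {vol : Measure (Fin (k + 1) → ℝ)} {μ p : Fin (k + 1) → ℝ}

lemma IsLorentzInvariant.integrable_comp_mink (hvol : IsLorentzInvariant vol)
    (hμ : μ ∈ hyperboloid k) (hp : p ∈ hyperboloid k) {φ : ℝ → ℝ}
    (h : Integrable (fun x => φ (mink x μ)) vol) : Integrable (fun x => φ (mink x p)) vol := by
  simpa [Function.comp_def, mink_minkRefl_left, minkRefl_sub_apply_left hμ hp] using
    (hvol.measurePreserving_minkRefl (mink_sub_self_nonneg hμ hp)).integrable_comp_of_integrable h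

lemma exists_minkRefl_bisector (hμ : μ ∈ hyperboloid k) (hp : p ∈ hyperboloid k) (hne : μ ≠ p) :
    ∃ u, 0 ≤ mink u u ∧ ∀ y ∈ hyperboloid k, mink y μ = mink y p →
      mink (minkRefl u y) μ ≠ mink (minkRefl u y) p := by
  have hm := mink_lt_neg_one hμ hp hne
  set s := (-1 - mink μ p) / (1 - mink μ p)
  have hs : 0 < s := div_pos (by linarith) (by linarith)
  have hs1 : s < 1 := (div_lt_one (by linarith)).2 (by linarith)
  have hs_def : s * (1 - mink μ p) = -1 - mink μ p := div_mul_cancel₀ _ (by linarith)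
  set u := (1 + s) • μ - (1 - s) • p
  have huu : mink u u = 2 * (1 - mink μ p) * (s - s ^ 2) := by
    simp only [u, mink_sub_left, mink_sub_right, mink_smul_left, mink_smul_right, hμ.1, hp.1,
      mink_comm p μ]
    linear_combination (-2) * hs_def
  have huu_pos : 0 < mink u u := by
    rw [huu]; exact mul_pos (by linarith) (by nlinarith)
  refine ⟨u, huu_pos.le, fun y hy hyeq => ?_⟩
  -- on the bisector `(y, u) = 2 s (y, μ) ≠ 0`, so the reflection shifts `(y, μ - p)` off zero
  have hy := mink_le_neg_one hy hμ
  have hdiff : mink (minkRefl u y) μ - mink (minkRefl u y) p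
      = 8 * s * mink y μ * (1 + mink μ p) / mink u u := by
    simp only [minkRefl, u, mink_sub_left, mink_sub_right, mink_smul_left, mink_smul_right,
      hμ.1, hp.1, mink_comm p μ, ← hyeq]
    field_simp
    ring
  rw [← sub_ne_zero, hdiff]
  exact (div_pos (mul_pos_of_neg_of_neg (by nlinarith) (by linarith)) huu_pos).ne'

lemma IsLorentzInvariant.measure_bisector_compl_pos (hvol : IsLorentzInvariant vol)
    (hvol0 : vol ≠ 0) (hsupp : vol (hyperboloid k)ᶜ = 0) (hμ : μ ∈ hyperboloid k)
    (hp : p ∈ hyperboloid k) (hne : μ ≠ p) :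
    0 < vol {x | x ∈ hyperboloid k ∧ mink x μ ≠ mink x p} := by
  obtain ⟨u, hu, hmove⟩ := exists_minkRefl_bisector hμ hp hne
  set S := {x | x ∈ hyperboloid k ∧ mink x μ ≠ mink x p}
  set B := {x | x ∈ hyperboloid k ∧ mink x μ = mink x p}
  have hR := hvol.measurePreserving_minkRefl hu
  have hBS : vol B ≤ vol S :=
    calc vol B ≤ vol (minkRefl u ⁻¹' S) :=
          measure_mono fun y hy => ⟨minkRefl_mapsTo hu hy.1, hmove y hy.1 hy.2⟩
      _ ≤ vol.map (minkRefl u) S := Measure.le_map_apply hR.aemeasurable S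
      _ = vol S := by rw [hR.map_eq]
  have hcover : univ ⊆ (hyperboloid k)ᶜ ∪ (B ∪ S) := by
    intro x _
    by_cases hx : x ∈ hyperboloid k
    · by_cases h : mink x μ = mink x p
      · exact Or.inr (Or.inl ⟨hx, h⟩)
      · exact Or.inr (Or.inr ⟨hx, h⟩)
    · exact Or.inl hx
  rw [pos_iff_ne_zero]
  intro hS
  apply hvol0
  rw [← Measure.measure_univ_eq_zero]
  refine nonpos_iff_eq_zero.1 ((measure_mono hcover).trans ?_)
  calc vol ((hyperboloid k)ᶜ ∪ (B ∪ S)) ≤ vol (hyperboloid k)ᶜ + (vol B + vol S) :=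
        (measure_union_le _ _).trans (by gcongr; exact measure_union_le _ _)
    _ ≤ 0 := by rw [hsupp, hS, nonpos_iff_eq_zero.1 (hBS.trans_eq hS)]; simp

end Invariance

section Rearrangement

variable {k : ℕ} {κ c : ℝ} {x μ p : Fin (k + 1) → ℝ}

lemma sq_hypDist_sub_mul_exp_sub_pos (hκ : 0 < κ) (hc : 0 < c) (hx : x ∈ hyperboloid k)
    (hμ : μ ∈ hyperboloid k) (hp : p ∈ hyperboloid k) (h : mink x μ ≠ mink x p) :
    0 < (hypDist x p ^ 2 - hypDist x μ ^ 2) *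
      (c * exp (κ * mink x μ) - c * exp (κ * mink x p)) :=
  sub_mul_sub_pos_of_strictAntiOn_of_strictMonoOn strictAntiOn_sq_arcosh_neg
    (StrictMono.strictMonoOn (f := fun s => c * exp (κ * s))
      (fun a b hab => by dsimp only; gcongr) _)
    (mink_le_neg_one hx hμ) (mink_le_neg_one hx hp) h

lemma sq_hypDist_sub_mul_exp_sub_nonneg (hκ : 0 < κ) (hc : 0 < c) (hx : x ∈ hyperboloid k)
    (hμ : μ ∈ hyperboloid k) (hp : p ∈ hyperboloid k) :
    0 ≤ (hypDist x p ^ 2 - hypDist x μ ^ 2) *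
      (c * exp (κ * mink x μ) - c * exp (κ * mink x p)) := by
  rcases eq_or_ne (mink x μ) (mink x p) with h | h
  · simp [hypDist, h]
  · exact (sq_hypDist_sub_mul_exp_sub_pos hκ hc hx hμ hp h).le

end Rearrangement

/-- The location parameter `μ` is the unique Fréchet mean of the hyperboloid
(hyperbolic von Mises–Fisher) distribution, with density proportional to
`exp(κ(x,μ))` with respect to the invariant volume measure on `H^k`. -/
theorem hyperboloid_frechetMean (k : ℕ) (κ : ℝ) (hκ : 0 < κ)
    (μ : Fin (k + 1) → ℝ) (hμ : μ ∈ hyperboloid k)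
    (vol : Measure (Fin (k + 1) → ℝ))
    (hsupp : vol (hyperboloid k)ᶜ = 0)
    (hvol : ∀ g : (Fin (k + 1) → ℝ) → (Fin (k + 1) → ℝ), Measurable g →
      (∀ x y, mink (g x) (g y) = mink x y) →
      Set.MapsTo g (hyperboloid k) (hyperboloid k) → vol.map g = vol)
    (c : ℝ) (hc : 0 < c)
    (P : Measure (Fin (k + 1) → ℝ))
    (hP : P = vol.withDensity (fun x => ENNReal.ofReal (c * Real.exp (κ * mink x μ))))
    (hProb : IsProbabilityMeasure P) :
    ∀ p ∈ hyperboloid k, p ≠ μ →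
      ∫ x, hypDist x μ ^ 2 ∂P < ∫ x, hypDist x p ^ 2 ∂P := by
  intro p hp hne
  set D := fun x : Fin (k + 1) → ℝ => c * exp (κ * mink x μ)
  have hDm : Measurable D := by fun_prop
  have hD0 : ∀ x, 0 ≤ D x := fun x => by positivity
  have hvol0 : vol ≠ 0 := by
    rintro rfl
    simpa [hP] using hProb.measure_univ
  have hexp : ∀ q ∈ hyperboloid k, Integrable (fun x => exp (κ * mink x q)) vol := fun q hq =>
    IsLorentzInvariant.integrable_comp_mink hvol hμ hq (φ := fun s => exp (κ * s))
      ((integrable_const_mul_iff (isUnit_iff_ne_zero.2 hc.ne') _).1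
        (integrable_of_isFiniteMeasure_withDensity_ofReal hDm hD0 (hP ▸ inferInstance)))
  have hmoment : ∀ q ∈ hyperboloid k, Integrable (fun x => D x * hypDist x q ^ 2) vol :=
    fun q hq => by
      simpa only [D, mul_comm, mul_left_comm] using
        (integrable_sq_hypDist_mul_exp hκ hsupp hexp hμ hq).const_mul c
  rw [hP, integral_withDensity_ofReal hDm hD0, integral_withDensity_ofReal hDm hD0]
  refine integral_mul_lt_of_measurePreserving
    (IsLorentzInvariant.measurePreserving_minkRefl hvol (mink_sub_self_nonneg hμ hp))
    (D' := fun x => c * exp (κ * mink x p)) (fun x => ?_) (fun x => ?_) (fun x => ?_)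
    (hmoment μ hμ) (hmoment p hp) ?_ ?_
  · rw [hypDist_minkRefl_left, minkRefl_sub_apply_left hμ hp]
  · rw [hypDist_minkRefl_left, minkRefl_sub_apply_right hμ hp]
  · simp only [D, mink_minkRefl_left, minkRefl_sub_apply_left hμ hp]
  · filter_upwards [mem_ae_iff.2 hsupp] with x hx
      using sq_hypDist_sub_mul_exp_sub_nonneg hκ hc hx hμ hp
  · exact (IsLorentzInvariant.measure_bisector_compl_pos hvol hvol0 hsupp hμ hp hne.symm).trans_le
      (measure_mono fun x hx => (sq_hypDist_sub_mul_exp_sub_pos hκ hc hx.1 hμ hp hx.2).ne')
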